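/- Let Ω ⊂ ℝ^d be a bounded Lipschitz domain and α > 0. The unique minimizer of J(y,u) = ‖y+1‖²_{L²(Ω)} + α‖u‖²_{L²(Ω)} over pairs (y,u) ∈ H¹(Ω) × L²(Ω) with u ≥ 0 a.e. and ∫_Ω (∇y·∇v + y v) = ∫_Ω u v for all v ∈ H¹(Ω), is (y,u) = (0,0), with optimal value |Ω|. -/

import Mathlib

/-! Testing the state equation with `v ≡ 1` gives `∫_Ω y = ∫_Ω u ≥ 0` for every feasible
pair. Expanding the square, `J(y,u) = |Ω| + ‖y‖² + 2 ∫_Ω y + α ‖u‖² ≥ |Ω|`, and equality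
forces `‖y‖ = ‖u‖ = 0`. -/

open MeasureTheory

/-- An `H¹(Ω)`-function: differentiable with both the function and its gradient in `L²(Ω)`. -/
def MemH1 {d : ℕ} (Ω : Set (EuclideanSpace ℝ (Fin d)))
    (y : EuclideanSpace ℝ (Fin d) → ℝ) : Prop :=
  Differentiable ℝ y ∧ MemLp y 2 (volume.restrict Ω) ∧
    MemLp (fun x => ‖gradient y x‖) 2 (volume.restrict Ω)

/-- A feasible pair `(y,u)` for the model problem: `u ∈ L²(Ω)` with `u ≥ 0` a.e.,
`y ∈ H¹(Ω)`, and the weak Neumann state equation `-Δy + y = u` holds. -/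
def Feasible {d : ℕ} (Ω : Set (EuclideanSpace ℝ (Fin d)))
    (y u : EuclideanSpace ℝ (Fin d) → ℝ) : Prop :=
  MemH1 Ω y ∧ MemLp u 2 (volume.restrict Ω) ∧ (∀ᵐ x ∂(volume.restrict Ω), 0 ≤ u x) ∧
    ∀ v : EuclideanSpace ℝ (Fin d) → ℝ, MemH1 Ω v →
      ∫ x in Ω, ((inner ℝ (gradient y x) (gradient v x) : ℝ) + y x * v x) =
        ∫ x in Ω, u x * v x

section SquareIntegrals

variable {X : Type*} [MeasurableSpace X] {μ : Measure X} {f : X → ℝ}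

theorem integral_add_one_sq [IsFiniteMeasure μ] (hf : MemLp f 2 μ) :
    ∫ x, (f x + 1) ^ 2 ∂μ = ∫ x, f x ^ 2 ∂μ + 2 * ∫ x, f x ∂μ + μ.real Set.univ := by
  have hf1 : Integrable f μ := hf.integrable one_le_two
  simp_rw [add_sq, mul_one, one_pow]
  have hsum : Integrable (fun x => f x ^ 2 + 2 * f x) μ :=
    hf.integrable_sq.add (hf1.const_mul 2)
  rw [integral_add hsum (integrable_const 1),
    integral_add hf.integrable_sq (hf1.const_mul 2), integral_const_mul, integral_const,
    smul_eq_mul, mul_one]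

theorem ae_eq_zero_of_integral_sq_eq_zero (hf : MemLp f 2 μ) (h : ∫ x, f x ^ 2 ∂μ = 0) :
    ∀ᵐ x ∂μ, f x = 0 := by
  filter_upwards [(integral_eq_zero_iff_of_nonneg (fun x => sq_nonneg (f x))
    hf.integrable_sq).mp h] with x hx
  exact pow_eq_zero_iff two_ne_zero |>.mp hx

end SquareIntegrals

section Feasible

variable {d : ℕ} {Ω : Set (EuclideanSpace ℝ (Fin d))} {y u : EuclideanSpace ℝ (Fin d) → ℝ}

theorem memH1_const (hΩ : volume Ω ≠ ⊤) (c : ℝ) : MemH1 Ω (fun _ => c) := by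
  have : IsFiniteMeasure (volume.restrict Ω) := isFiniteMeasure_restrict.mpr hΩ
  refine ⟨differentiable_const c, memLp_const c, ?_⟩
  simpa only [gradient_fun_const, norm_zero] using MemLp.zero'

theorem feasible_zero (hΩ : volume Ω ≠ ⊤) : Feasible Ω (fun _ => 0) (fun _ => 0) :=
  ⟨memH1_const hΩ 0, MemLp.zero, Filter.Eventually.of_forall fun _ => le_rfl,
    fun _ _ => by simp [gradient_fun_const]⟩

theorem Feasible.integral_eq (h : Feasible Ω y u) (hΩ : volume Ω ≠ ⊤) :
    ∫ x in Ω, y x = ∫ x in Ω, u x := by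
  simpa [gradient_fun_const] using h.2.2.2 (fun _ => 1) (memH1_const hΩ 1)

theorem Feasible.integral_nonneg (h : Feasible Ω y u) (hΩ : volume Ω ≠ ⊤) : 0 ≤ ∫ x in Ω, y x :=
  h.integral_eq hΩ ▸ integral_nonneg_of_ae h.2.2.1

end Feasible

theorem stmt6_general {d : ℕ} (Ω : Set (EuclideanSpace ℝ (Fin d)))
    (hΩb : Bornology.IsBounded Ω)
    (α : ℝ) (hα : 0 < α)
    (J : (EuclideanSpace ℝ (Fin d) → ℝ) → (EuclideanSpace ℝ (Fin d) → ℝ) → ℝ)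
    (hJ : ∀ y u, J y u = (∫ x in Ω, (y x + 1) ^ 2) + α * ∫ x in Ω, (u x) ^ 2) :
    Feasible Ω (fun _ => 0) (fun _ => 0) ∧
    J (fun _ => 0) (fun _ => 0) = (volume Ω).toReal ∧
    (∀ y u, Feasible Ω y u → (volume Ω).toReal ≤ J y u) ∧
    (∀ y u, Feasible Ω y u → J y u = (volume Ω).toReal →
      (∀ᵐ x ∂(volume.restrict Ω), y x = 0) ∧ (∀ᵐ x ∂(volume.restrict Ω), u x = 0)) := by
  have hΩ : volume Ω ≠ ⊤ := hΩb.measure_lt_top.ne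
  have : IsFiniteMeasure (volume.restrict Ω) := isFiniteMeasure_restrict.mpr hΩ
  have hcost : ∀ y u, Feasible Ω y u → J y u =
      (volume Ω).toReal + ((∫ x in Ω, y x ^ 2) + 2 * (∫ x in Ω, y x) + α * ∫ x in Ω, u x ^ 2) :=
    fun y u h => by
      rw [hJ, integral_add_one_sq h.1.2.1, measureReal_restrict_apply_univ, measureReal_def]
      ring
  have hexcess_nonneg : ∀ y u, Feasible Ω y u →
      0 ≤ ∫ x in Ω, y x ^ 2 ∧ 0 ≤ ∫ x in Ω, y x ∧ 0 ≤ ∫ x in Ω, u x ^ 2 :=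
    fun y u h => ⟨integral_nonneg fun _ => sq_nonneg _, h.integral_nonneg hΩ,
      integral_nonneg fun _ => sq_nonneg _⟩
  refine ⟨feasible_zero hΩ, ?_, fun y u h => ?_, fun y u h hmin => ?_⟩
  · simpa using hcost _ _ (feasible_zero hΩ)
  · obtain ⟨hy2, hy, hu2⟩ := hexcess_nonneg y u h
    rw [hcost y u h]
    nlinarith
  · obtain ⟨hy2, hy, hu2⟩ := hexcess_nonneg y u h
    rw [hcost y u h] at hmin
    exact ⟨ae_eq_zero_of_integral_sq_eq_zero h.1.2.1 (by nlinarith),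
      ae_eq_zero_of_integral_sq_eq_zero h.2.1 (by nlinarith)⟩

/-- The unique minimizer of `J(y,u) = ‖y+1‖² + α‖u‖²` over feasible pairs is `(0,0)`,
with optimal value `|Ω|`. -/
theorem stmt6 {d : ℕ} (Ω : Set (EuclideanSpace ℝ (Fin d)))
    (hΩo : IsOpen Ω) (hΩb : Bornology.IsBounded Ω) (hΩne : Ω.Nonempty)
    (α : ℝ) (hα : 0 < α)
    (J : (EuclideanSpace ℝ (Fin d) → ℝ) → (EuclideanSpace ℝ (Fin d) → ℝ) → ℝ)
    (hJ : ∀ y u, J y u = (∫ x in Ω, (y x + 1) ^ 2) + α * ∫ x in Ω, (u x) ^ 2) :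
    Feasible Ω (fun _ => 0) (fun _ => 0) ∧
    J (fun _ => 0) (fun _ => 0) = (volume Ω).toReal ∧
    (∀ y u, Feasible Ω y u → (volume Ω).toReal ≤ J y u) ∧
    (∀ y u, Feasible Ω y u → J y u = (volume Ω).toReal →
      (∀ᵐ x ∂(volume.restrict Ω), y x = 0) ∧ (∀ᵐ x ∂(volume.restrict Ω), u x = 0)) :=
  stmt6_general Ω hΩb α hα J hJ
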